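/- arXiv:2502.00184 — 2 statements merged into one kernel-verified Lean document; each statement's English description precedes it below -/
import Mathlib

section
/- Let u : Ω → ℝ be bounded on a bounded open set Ω ⊆ ℝⁿ and let u_ε be its sup-convolution with exponent q ≥ 2. Then u_ε is semi-convex: there exists a constant c > 0, depending on ε, q, and sup_Ω u - inf_Ω u, such that the function x ↦ u_ε(x) + c|x|² is convex on the set Ω_{r(ε)} = {x ∈ Ω : dist(x, ∂Ω) > r(ε)}, where r(ε) = (q ε^{q-1} (sup_Ω u - inf_Ω u))^{1/q}. -/
/-!
Every competitor `x ↦ u y - C ‖x - y‖ ^ q` of the sup-convolution, `C = 1 / (q ε ^ (q - 1))`,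
becomes convex on convex subsets of `Ω` after adding `c ‖x‖ ^ 2`, with `c` independent of
`y ∈ Ω`: since `c ‖x‖ ^ 2 - c ‖x - y‖ ^ 2` is affine in `x`, it suffices that
`t ↦ c t ^ 2 - C t ^ q` be convex and nondecreasing on `[0, D]`, `D` bounding `‖x - y‖`, which
holds once `2 c ≥ C q (q - 1) D ^ (q - 2)` because `q ≥ 2`. A pointwise bounded supremum of
convex functions is convex.
-/

open Set Metric

theorem ConvexOn.comp_of_mapsTo {𝕜 E α β : Type*} [Semiring 𝕜] [PartialOrder 𝕜]
    [AddCommMonoid E] [AddCommMonoid α] [PartialOrder α] [AddCommMonoid β] [PartialOrder β]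
    [SMul 𝕜 E] [SMul 𝕜 α] [SMul 𝕜 β] {s : Set E} {t : Set β} {f : E → β} {g : β → α}
    (hg : ConvexOn 𝕜 t g) (hf : ConvexOn 𝕜 s f) (hg' : MonotoneOn g t) (hst : MapsTo f s t) :
    ConvexOn 𝕜 s (g ∘ f) :=
  ⟨hf.1, fun _ hx _ hy _ _ ha hb hab =>
    (hg' (hst (hf.1 hx hy ha hb hab)) (hg.1 (hst hx) (hst hy) ha hb hab)
      (hf.2 hx hy ha hb hab)).trans (hg.2 (hst hx) (hst hy) ha hb hab)⟩

theorem ConvexOn.ciSup {ι E : Type*} [Nonempty ι] [AddCommMonoid E] [SMul ℝ E] {s : Set E}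
    {f : ι → E → ℝ} (hf : ∀ i, ConvexOn ℝ s (f i))
    (hbdd : ∀ x ∈ s, BddAbove (range fun i => f i x)) :
    ConvexOn ℝ s fun x => ⨆ i, f i x :=
  ⟨(hf (Classical.arbitrary ι)).1, fun x hx y hy a b ha hb hab =>
    ciSup_le fun i => ((hf i).2 hx hy ha hb hab).trans <| by
      gcongr
      exacts [le_ciSup (hbdd x hx) i, le_ciSup (hbdd y hy) i]⟩

section SquareMinusPower

variable {c C q D : ℝ}

theorem hasDerivAt_mul_sq_sub_mul_rpow (hq : 1 ≤ q) (t : ℝ) :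
    HasDerivAt (fun t => c * t ^ 2 - C * t ^ q) (2 * c * t - C * q * t ^ (q - 1)) t :=
  (((hasDerivAt_pow 2 t).const_mul c).sub
    ((Real.hasDerivAt_rpow_const (Or.inr hq)).const_mul C)).congr_deriv (by push_cast; ring)

theorem mul_rpow_sub_two_le_of_mem_Icc (hC : 0 ≤ C) (hq : 2 ≤ q)
    (hc : C * q * (q - 1) * D ^ (q - 2) ≤ 2 * c) {t : ℝ} (ht : t ∈ Icc 0 D) :
    C * q * (q - 1) * t ^ (q - 2) ≤ 2 * c := by
  refine le_trans ?_ hc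
  have : 0 ≤ C * q * (q - 1) := by
    have : 0 ≤ q - 1 := by linarith
    positivity
  gcongr
  exacts [ht.1, ht.2]

theorem monotoneOn_mul_sq_sub_mul_rpow (hC : 0 ≤ C) (hq : 2 ≤ q)
    (hc : C * q * (q - 1) * D ^ (q - 2) ≤ 2 * c) :
    MonotoneOn (fun t => c * t ^ 2 - C * t ^ q) (Icc 0 D) := by
  refine monotoneOn_of_hasDerivWithinAt_nonneg (convex_Icc 0 D)
    (fun t _ => (hasDerivAt_mul_sq_sub_mul_rpow (by linarith) t).continuousAt.continuousWithinAt)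
    (fun t _ => (hasDerivAt_mul_sq_sub_mul_rpow (by linarith) t).hasDerivWithinAt) ?_
  rw [interior_Icc]
  intro t ht
  have hbound := mul_rpow_sub_two_le_of_mem_Icc hC hq hc (Ioo_subset_Icc_self ht)
  have hpow : t ^ (q - 1) = t ^ (q - 2) * t := by
    rw [← Real.rpow_add_one ht.1.ne']
    ring_nf
  have : 0 ≤ C * q * t ^ (q - 2) * (q - 2) * t := by
    have : 0 ≤ q - 2 := by linarith
    have := ht.1.le
    positivity
  rw [hpow]
  nlinarith [mul_le_mul_of_nonneg_right hbound ht.1.le]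

theorem convexOn_mul_sq_sub_mul_rpow (hC : 0 ≤ C) (hq : 2 ≤ q)
    (hc : C * q * (q - 1) * D ^ (q - 2) ≤ 2 * c) :
    ConvexOn ℝ (Icc 0 D) (fun t => c * t ^ 2 - C * t ^ q) := by
  have hderiv2 (t : ℝ) : HasDerivAt (fun t => 2 * c * t - C * q * t ^ (q - 1))
      (2 * c - C * q * (q - 1) * t ^ (q - 2)) t :=
    (((hasDerivAt_id t).const_mul (2 * c)).sub
      ((Real.hasDerivAt_rpow_const (p := q - 1) (Or.inr (by linarith))).const_mul (C * q))
      ).congr_deriv (by ring_nf)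
  refine convexOn_of_hasDerivWithinAt2_nonneg (convex_Icc 0 D)
    (fun t _ => (hasDerivAt_mul_sq_sub_mul_rpow (by linarith) t).continuousAt.continuousWithinAt)
    (fun t _ => (hasDerivAt_mul_sq_sub_mul_rpow (by linarith) t).hasDerivWithinAt)
    (fun t _ => (hderiv2 t).hasDerivWithinAt) fun t ht => ?_
  rw [interior_Icc] at ht
  linarith [mul_rpow_sub_two_le_of_mem_Icc hC hq hc (Ioo_subset_Icc_self ht)]

end SquareMinusPower

theorem convexOn_mul_norm_sq_sub_mul_norm_sub_rpow {E : Type*} [NormedAddCommGroup E]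
    [InnerProductSpace ℝ E] {c C q D : ℝ} (hC : 0 ≤ C) (hq : 2 ≤ q)
    (hc : C * q * (q - 1) * D ^ (q - 2) ≤ 2 * c) (y : E) {s : Set E} (hs : Convex ℝ s)
    (hsD : s ⊆ closedBall y D) :
    ConvexOn ℝ s fun x => c * ‖x‖ ^ 2 - C * ‖x - y‖ ^ q := by
  have hradial : ConvexOn ℝ s fun x => c * dist x y ^ 2 - C * dist x y ^ q :=
    (convexOn_mul_sq_sub_mul_rpow hC hq hc).comp_of_mapsTo (convexOn_dist y hs)
      (monotoneOn_mul_sq_sub_mul_rpow hC hq hc) fun x hx => ⟨dist_nonneg, hsD hx⟩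
  have haffine : ConvexOn ℝ s fun x => (2 * c) • innerₛₗ ℝ y x + -(c * ‖y‖ ^ 2) :=
    (((2 * c) • innerₛₗ ℝ y).convexOn hs).add_const _
  refine (hradial.add haffine).congr fun x _ => ?_
  simp only [Pi.add_apply, dist_eq_norm, innerₛₗ_apply_apply, smul_eq_mul,
    norm_sub_sq_real, real_inner_comm x y]
  ring

noncomputable def supConv {E : Type*} [SeminormedAddCommGroup E] (Ω : Set E) (u : E → ℝ)
    (C q : ℝ) (x : E) : ℝ :=
  ⨆ y : Ω, u y - C * ‖x - y‖ ^ q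

theorem convexOn_supConv_add_mul_norm_sq {E : Type*} [NormedAddCommGroup E]
    [InnerProductSpace ℝ E] {Ω : Set E} [Nonempty Ω] {u : E → ℝ} (hu : BddAbove (u '' Ω))
    {c C q D : ℝ} (hC : 0 ≤ C) (hq : 2 ≤ q) (hc : C * q * (q - 1) * D ^ (q - 2) ≤ 2 * c)
    {S : Set E} (hS : Convex ℝ S) (hSD : ∀ y ∈ Ω, S ⊆ closedBall y D) :
    ConvexOn ℝ S fun x => supConv Ω u C q x + c * ‖x‖ ^ 2 := by
  obtain ⟨M, hM⟩ := hu
  have hle (x : E) (y : Ω) : u y - C * ‖x - y‖ ^ q ≤ M := by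
    have := hM (mem_image_of_mem u y.2)
    have : 0 ≤ C * ‖x - y‖ ^ q := by positivity
    linarith
  have hbdd (x : E) : BddAbove (range fun y : Ω => u y - C * ‖x - y‖ ^ q) :=
    ⟨M, forall_mem_range.2 (hle x)⟩
  have hcompetitor (y : Ω) :
      ConvexOn ℝ S fun x => u y - C * ‖x - y‖ ^ q + c * ‖x‖ ^ 2 := by
    refine ((convexOn_mul_norm_sq_sub_mul_norm_sub_rpow hC hq hc (y : E) hS
      (hSD y y.2)).add_const (u y)).congr fun x _ => ?_
    simp only [Pi.add_apply]
    ring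
  refine (ConvexOn.ciSup hcompetitor fun x _ => ⟨M + c * ‖x‖ ^ 2,
    forall_mem_range.2 fun y => add_le_add (hle x y) le_rfl⟩).congr fun x _ => ?_
  exact (ciSup_add (hbdd x) _).symm

theorem supConvolution_semiconvex_general
    (n : ℕ) (Ω : Set (EuclideanSpace ℝ (Fin n)))
    (hne : Ω.Nonempty) (hbdd : Bornology.IsBounded Ω)
    (u : EuclideanSpace ℝ (Fin n) → ℝ)
    (hub : ∃ M : ℝ, ∀ x ∈ Ω, |u x| ≤ M)
    (q : ℝ) (hq : 2 ≤ q) (ε : ℝ) (hε : 0 < ε)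
    (uε : EuclideanSpace ℝ (Fin n) → ℝ)
    (huε : ∀ x, uε x = sSup {v : ℝ | ∃ y ∈ Ω,
      v = u y - (1 / (q * ε ^ (q-1))) * ‖x - y‖ ^ q})
    (r : ℝ) :
    ∃ c > (0:ℝ), ∀ S : Set (EuclideanSpace ℝ (Fin n)), Convex ℝ S →
      S ⊆ {x ∈ Ω | r < infDist x (frontier Ω)} →
      ConvexOn ℝ S (fun x => uε x + c * ‖x‖ ^ 2) := by
  obtain ⟨M, hM⟩ := hub
  have : Nonempty Ω := hne.to_subtype
  set C := 1 / (q * ε ^ (q - 1))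
  have hC : 0 < C := by
    have := Real.rpow_pos_of_pos hε (q - 1)
    have : 0 < q := by linarith
    positivity
  have huε_eq (x : EuclideanSpace ℝ (Fin n)) : uε x = supConv Ω u C q x := by
    rw [huε, supConv, ← sSup_range]
    congr 1
    ext v
    simp [eq_comm]
  have hq₁ : 0 < q - 1 := by linarith
  have hD : 0 < diam Ω + 1 := by positivity
  refine ⟨C * q * (q - 1) * (diam Ω + 1) ^ (q - 2) / 2, by positivity, fun S hS hSΩ => ?_⟩
  refine (convexOn_supConv_add_mul_norm_sq (D := diam Ω + 1) ⟨M, ?_⟩ hC.le hq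
    (mul_div_cancel₀ _ two_ne_zero).ge hS fun y hy x hx => ?_).congr fun x _ => by rw [huε_eq]
  · rintro _ ⟨y, hy, rfl⟩
    exact (abs_le.1 (hM y hy)).2
  · exact (dist_le_diam_of_mem hbdd (hSΩ hx).1 hy).trans (by linarith)

/-- Sup-convolutions are semi-convex: `u_ε + c|·|²` is convex on the inner
parallel set `Ω_{r(ε)}`, for a suitable `c > 0`. -/
theorem supConvolution_semiconvex
    (n : ℕ) (Ω : Set (EuclideanSpace ℝ (Fin n)))
    (hne : Ω.Nonempty) (hbdd : Bornology.IsBounded Ω) (hopen : IsOpen Ω)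
    (u : EuclideanSpace ℝ (Fin n) → ℝ)
    (hub : ∃ M : ℝ, ∀ x ∈ Ω, |u x| ≤ M)
    (q : ℝ) (hq : 2 ≤ q) (ε : ℝ) (hε : 0 < ε)
    (uε : EuclideanSpace ℝ (Fin n) → ℝ)
    (huε : ∀ x, uε x = sSup {v : ℝ | ∃ y ∈ Ω,
      v = u y - (1 / (q * ε ^ (q-1))) * ‖x - y‖ ^ q})
    (r : ℝ)
    (hr : r = (q * ε ^ (q-1) * (sSup (u '' Ω) - sInf (u '' Ω))) ^ (1/q)) :
    ∃ c > (0:ℝ), ∀ S : Set (EuclideanSpace ℝ (Fin n)), Convex ℝ S →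
      S ⊆ {x ∈ Ω | r < infDist x (frontier Ω)} →
      ConvexOn ℝ S (fun x => uε x + c * ‖x‖ ^ 2) :=
  supConvolution_semiconvex_general n Ω hne hbdd u hub q hq ε hε uε huε r
end

section
/- Let p > 1, λ₀, λ₁ ∈ ℝ, t ∈ (0,1), and λ_t = (1-t)λ₀ + tλ₁. Let u₀, u₁ be positive C² functions near x̄₀, x̄₁ with ∇u₀(x̄₀)/u₀(x̄₀) = ∇u₁(x̄₁)/u₁(x̄₁) = θ ≠ 0, satisfying at those points the equations -div(|∇uᵢ|^{p-2}∇uᵢ) + ⟨x̄ᵢ, ∇uᵢ⟩|∇uᵢ|^{p-2} = λᵢ uᵢ^{p-1} for i = 0,1. Set x̄ = (1-t)x̄₀ + tx̄₁ and ψ(x) = u₀(x - x̄ + x̄₀)^{1-t} u₁(x - x̄ + x̄₁)^t. Then -div(|∇ψ|^{p-2}∇ψ)(x̄) + ⟨x̄, ∇ψ(x̄)⟩|∇ψ(x̄)|^{p-2} ≤ λ_t ψ(x̄)^{p-1}. -/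
/-!
Write `∇u = u • θᵤ` with the logarithmic gradient `θᵤ = ∇ log u`. Since `A(v) = ‖v‖^(p-2) • v` is
`(p-1)`-homogeneous, the flux `A(∇u)` equals `u^(p-1) • A(θᵤ)`, and the product rule gives,
wherever `θᵤ(x) = θ ≠ 0`,
  `Δₚu(x) - ⟪x, ∇u(x)⟫ ‖∇u(x)‖^(p-2)`
    `= u(x)^(p-1) ((p-1) ‖θ‖^p + tr (DA(θ) ∘ Dθᵤ(x)) - ⟪x, θ⟫ ‖θ‖^(p-2))`.
The bracket is affine in the pair `(x, Dθᵤ(x))`. As `log ψ` is the convex combination of the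
translates of `log u₀` and `log u₁`, we get `θ_ψ(x̄) = θ` and
`Dθ_ψ(x̄) = (1-t) Dθ₀(x̄₀) + t Dθ₁(x̄₁)`, so the bracket for `ψ` is the convex combination of those
for `u₀` and `u₁`, namely of `-λ₀` and `-λ₁`: the inequality holds with equality.
-/

open Filter InnerProductSpace Topology

noncomputable section

section Divergence

variable {E : Type*} [NormedAddCommGroup E] [NormedSpace ℝ E]

def divergence (F : E → E) (x : E) : ℝ :=
  LinearMap.trace ℝ E (fderiv ℝ F x)

theorem Filter.EventuallyEq.divergence_eq {F G : E → E} {x : E} (h : F =ᶠ[𝓝 x] G) :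
    divergence F x = divergence G x := by
  rw [divergence, divergence, h.fderiv_eq]

theorem ContinuousLinearMap.trace_smulRight [FiniteDimensional ℝ E] (c : E →L[ℝ] ℝ) (v : E) :
    LinearMap.trace ℝ E (c.smulRight v) = c v :=
  LinearMap.trace_smulRight (c : E →ₗ[ℝ] ℝ) v

theorem divergence_smul [FiniteDimensional ℝ E] {c : E → ℝ} {F : E → E} {x : E}
    (hc : DifferentiableAt ℝ c x) (hF : DifferentiableAt ℝ F x) :
    divergence (fun y => c y • F y) x = c x * divergence F x + fderiv ℝ c x (F x) := by
  rw [divergence, fderiv_fun_smul hc hF, ContinuousLinearMap.toLinearMap_add, map_add,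
    ContinuousLinearMap.toLinearMap_smul, map_smul, ContinuousLinearMap.trace_smulRight,
    smul_eq_mul, divergence]

theorem divergence_comp {G : E → E} {F : E → E} {x : E}
    (hG : DifferentiableAt ℝ G (F x)) (hF : DifferentiableAt ℝ F x) :
    divergence (fun y => G (F y)) x = LinearMap.trace ℝ E (fderiv ℝ G (F x) ∘L fderiv ℝ F x) := by
  rw [divergence, ← fderiv_comp x hG hF]; rfl

end Divergence

theorem EuclideanSpace.divergence_eq_sum {n : ℕ}
    (F : EuclideanSpace ℝ (Fin n) → EuclideanSpace ℝ (Fin n)) (x : EuclideanSpace ℝ (Fin n)) :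
    divergence F x = ∑ i, fderiv ℝ F x (EuclideanSpace.single i 1) i := by
  rw [divergence, LinearMap.trace_eq_matrix_trace ℝ (EuclideanSpace.basisFun (Fin n) ℝ).toBasis]
  simp [Matrix.trace, LinearMap.toMatrix_apply]

theorem ContDiffAt.comp_add_right {E : Type*} [NormedAddCommGroup E] [NormedSpace ℝ E]
    {u : E → ℝ} {x c : E} {k : WithTop ℕ∞} (hu : ContDiffAt ℝ k u (x + c)) :
    ContDiffAt ℝ k (fun y => u (y + c)) x :=
  hu.comp x (contDiffAt_id.add contDiffAt_const)

theorem Filter.Eventually.comp_add_right {X : Type*} [TopologicalSpace X] [Add X]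
    [ContinuousAdd X] {P : X → Prop} {x c : X} (h : ∀ᶠ y in 𝓝 (x + c), P y) :
    ∀ᶠ y in 𝓝 x, P (y + c) :=
  ((continuous_add_const c).tendsto x).eventually h

section LogGradient

variable {E : Type*} [NormedAddCommGroup E] [InnerProductSpace ℝ E] [CompleteSpace E]
  {f g u : E → ℝ} {f' g' x θ : E}

theorem HasGradientAt.add (hf : HasGradientAt f f' x) (hg : HasGradientAt g g' x) :
    HasGradientAt (fun y => f y + g y) (f' + g') x := by
  rw [hasGradientAt_iff_hasFDerivAt] at *
  rw [map_add]
  exact hf.add hg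

theorem HasGradientAt.const_mul (c : ℝ) (hf : HasGradientAt f f' x) :
    HasGradientAt (fun y => c * f y) (c • f') x := by
  rw [hasGradientAt_iff_hasFDerivAt] at *
  simpa using hf.const_mul c

theorem HasGradientAt.log (hf : HasGradientAt f f' x) (hx : f x ≠ 0) :
    HasGradientAt (fun y => Real.log (f y)) ((f x)⁻¹ • f') x := by
  rw [hasGradientAt_iff_hasFDerivAt] at *
  simpa using hf.log hx

theorem ContDiffAt.differentiableAt_gradient (hf : ContDiffAt ℝ 2 f x) :
    DifferentiableAt ℝ (gradient f) x :=
  (((toDual ℝ E).symm.contDiff.contDiffAt).comp x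
    (hf.fderiv_right (m := 1) (by norm_num))).differentiableAt one_ne_zero

def logGradient (u : E → ℝ) : E → E :=
  gradient fun y => Real.log (u y)

theorem gradient_eq_smul_logGradient (hu : DifferentiableAt ℝ u x) (hx : u x ≠ 0) :
    gradient u x = u x • logGradient u x := by
  rw [logGradient, (hu.hasGradientAt.log hx).gradient, smul_inv_smul₀ hx]

theorem logGradient_eq_of_gradient_eq_smul (hu : DifferentiableAt ℝ u x) (hx : u x ≠ 0)
    (h : gradient u x = u x • θ) : logGradient u x = θ :=
  smul_right_injective E hx <| show u x • logGradient u x = u x • θ by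
    rw [← gradient_eq_smul_logGradient hu hx, h]

theorem ContDiffAt.differentiableAt_logGradient (hu : ContDiffAt ℝ 2 u x) (hx : u x ≠ 0) :
    DifferentiableAt ℝ (logGradient u) x :=
  (hu.log hx).differentiableAt_gradient

theorem logGradient_comp_add_right (u : E → ℝ) (c x : E) :
    logGradient (fun y => u (y + c)) x = logGradient u (x + c) := by
  simp only [logGradient, gradient, fderiv_comp_add_right (f := fun z => Real.log (u z))]

theorem fderiv_logGradient_comp_add_right (u : E → ℝ) (c x : E) :
    fderiv ℝ (logGradient fun y => u (y + c)) x = fderiv ℝ (logGradient u) (x + c) := by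
  rw [funext (logGradient_comp_add_right u c), fderiv_comp_add_right]

theorem logGradient_rpow_mul_rpow (a b : ℝ) (hf : DifferentiableAt ℝ f x) (hf₀ : 0 < f x)
    (hg : DifferentiableAt ℝ g x) (hg₀ : 0 < g x) :
    logGradient (fun y => f y ^ a * g y ^ b) x = a • logGradient f x + b • logGradient g x := by
  have hlog : (fun y => Real.log (f y ^ a * g y ^ b)) =ᶠ[𝓝 x]
      fun y => a * Real.log (f y) + b * Real.log (g y) := by
    filter_upwards [continuousAt_const.eventually_lt hf.continuousAt hf₀,
      continuousAt_const.eventually_lt hg.continuousAt hg₀] with y hfy hgy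
    rw [Real.log_mul (Real.rpow_pos_of_pos hfy a).ne' (Real.rpow_pos_of_pos hgy b).ne',
      Real.log_rpow hfy, Real.log_rpow hgy]
  rw [logGradient, hlog.gradient_eq]
  exact ((hf.log hf₀.ne').hasGradientAt.const_mul a |>.add
    ((hg.log hg₀.ne').hasGradientAt.const_mul b)).gradient

theorem fderiv_logGradient_rpow_mul_rpow (a b : ℝ) (hf : ContDiffAt ℝ 2 f x)
    (hf₀ : ∀ᶠ y in 𝓝 x, 0 < f y) (hg : ContDiffAt ℝ 2 g x) (hg₀ : ∀ᶠ y in 𝓝 x, 0 < g y) :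
    fderiv ℝ (logGradient fun y => f y ^ a * g y ^ b) x
      = a • fderiv ℝ (logGradient f) x + b • fderiv ℝ (logGradient g) x := by
  have hV : logGradient (fun y => f y ^ a * g y ^ b) =ᶠ[𝓝 x]
      fun y => a • logGradient f y + b • logGradient g y := by
    filter_upwards [hf.eventually (by simp), hf₀, hg.eventually (by simp), hg₀]
      with y hfy hfy₀ hgy hgy₀
    exact logGradient_rpow_mul_rpow a b (hfy.differentiableAt two_ne_zero) hfy₀
      (hgy.differentiableAt two_ne_zero) hgy₀
  rw [hV.fderiv_eq]
  exact ((hf.differentiableAt_logGradient hf₀.self_of_nhds.ne').hasFDerivAt.const_smul a |>.add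
    ((hg.differentiableAt_logGradient hg₀.self_of_nhds.ne').hasFDerivAt.const_smul b)).fderiv

end LogGradient

section PFlux

variable {E : Type*} [NormedAddCommGroup E] [InnerProductSpace ℝ E] {v : E}

def pFlux (p : ℝ) (v : E) : E :=
  ‖v‖ ^ (p - 2) • v

theorem pFlux_smul_of_pos (p : ℝ) {a : ℝ} (ha : 0 < a) (v : E) :
    pFlux p (a • v) = a ^ (p - 1) • pFlux p v := by
  have ha' : a ^ (p - 2) * a = a ^ (p - 1) := by
    rw [← Real.rpow_add_one ha.ne']; ring_nf
  rw [pFlux, pFlux, norm_smul, Real.norm_of_nonneg ha.le, Real.mul_rpow ha.le (norm_nonneg v),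
    smul_smul, smul_smul, mul_right_comm, ha']

theorem differentiableAt_pFlux (p : ℝ) (hv : v ≠ 0) : DifferentiableAt ℝ (pFlux p) v :=
  ((differentiableAt_id.norm ℝ hv).rpow_const (Or.inl (norm_ne_zero_iff.2 hv))).smul
    differentiableAt_id

theorem inner_self_pFlux (p : ℝ) (hv : v ≠ 0) : inner ℝ v (pFlux p v) = ‖v‖ ^ p := by
  rw [pFlux, real_inner_smul_right, real_inner_self_eq_norm_sq, ← Real.rpow_natCast,
    ← Real.rpow_add (norm_pos_iff.2 hv)]
  norm_num

def normalizedGaussianPLaplacian (p : ℝ) (x θ : E) (A : E →L[ℝ] E) : ℝ :=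
  (p - 1) * ‖θ‖ ^ p + LinearMap.trace ℝ E (fderiv ℝ (pFlux p) θ ∘L A)
    - inner ℝ x θ * ‖θ‖ ^ (p - 2)

theorem normalizedGaussianPLaplacian_convex_comb (p t : ℝ) (x₀ x₁ θ : E) (A₀ A₁ : E →L[ℝ] E) :
    normalizedGaussianPLaplacian p ((1 - t) • x₀ + t • x₁) θ ((1 - t) • A₀ + t • A₁)
      = (1 - t) * normalizedGaussianPLaplacian p x₀ θ A₀
        + t * normalizedGaussianPLaplacian p x₁ θ A₁ := by
  simp only [normalizedGaussianPLaplacian, ContinuousLinearMap.comp_add,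
    ContinuousLinearMap.comp_smul, ContinuousLinearMap.toLinearMap_add,
    ContinuousLinearMap.toLinearMap_smul, map_add, map_smul, inner_add_left,
    real_inner_smul_left, smul_eq_mul]
  ring

end PFlux

section GaussianPLaplacian

variable {E : Type*} [NormedAddCommGroup E] [InnerProductSpace ℝ E] [CompleteSpace E]
  {u : E → ℝ} {x θ : E} {lam : ℝ}

theorem divergence_pFlux_gradient (p : ℝ) [FiniteDimensional ℝ E] (hu : ContDiffAt ℝ 2 u x)
    (hpos : ∀ᶠ y in 𝓝 x, 0 < u y) (hθ : logGradient u x = θ) (hθ₀ : θ ≠ 0) :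
    divergence (fun y => pFlux p (gradient u y)) x = u x ^ (p - 1) * ((p - 1) * ‖θ‖ ^ p
      + LinearMap.trace ℝ E (fderiv ℝ (pFlux p) θ ∘L fderiv ℝ (logGradient u) x)) := by
  subst hθ
  have hux : 0 < u x := hpos.self_of_nhds
  have hud : DifferentiableAt ℝ u x := hu.differentiableAt two_ne_zero
  have hflux : (fun y => pFlux p (gradient u y)) =ᶠ[𝓝 x]
      fun y => u y ^ (p - 1) • pFlux p (logGradient u y) := by
    filter_upwards [hu.eventually (by simp), hpos] with y huy huy₀
    rw [gradient_eq_smul_logGradient (huy.differentiableAt two_ne_zero) huy₀.ne',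
      pFlux_smul_of_pos p huy₀]
  have hV := hu.differentiableAt_logGradient hux.ne'
  have hH := differentiableAt_pFlux p hθ₀
  rw [hflux.divergence_eq, divergence_smul (F := fun y => pFlux p (logGradient u y))
    (hud.rpow_const (Or.inl hux.ne')) (hH.comp x hV),
    divergence_comp hH hV, (hud.hasFDerivAt.rpow_const (Or.inl hux.ne')).fderiv]
  have hdir : fderiv ℝ u x (pFlux p (logGradient u x)) = u x * ‖logGradient u x‖ ^ p := by
    rw [← inner_gradient_left, gradient_eq_smul_logGradient hud hux.ne', real_inner_smul_left,
      inner_self_pFlux p hθ₀]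
  have hpow : u x ^ (p - 1 - 1) * u x = u x ^ (p - 1) := by
    rw [← Real.rpow_add_one hux.ne']; ring_nf
  simp only [smul_apply, smul_eq_mul, hdir]
  linear_combination (p - 1) * ‖logGradient u x‖ ^ p * hpow

def gaussianPLaplacian (p : ℝ) (u : E → ℝ) (x : E) : ℝ :=
  divergence (fun y => pFlux p (gradient u y)) x
    - inner ℝ x (gradient u x) * ‖gradient u x‖ ^ (p - 2)

theorem gaussianPLaplacian_eq (p : ℝ) [FiniteDimensional ℝ E] (hu : ContDiffAt ℝ 2 u x)
    (hpos : ∀ᶠ y in 𝓝 x, 0 < u y) (hθ : logGradient u x = θ) (hθ₀ : θ ≠ 0) :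
    gaussianPLaplacian p u x =
      u x ^ (p - 1) * normalizedGaussianPLaplacian p x θ (fderiv ℝ (logGradient u) x) := by
  have hux : 0 < u x := hpos.self_of_nhds
  have hpow : u x * u x ^ (p - 2) = u x ^ (p - 1) := by
    rw [mul_comm, ← Real.rpow_add_one hux.ne']; ring_nf
  rw [gaussianPLaplacian, normalizedGaussianPLaplacian, divergence_pFlux_gradient p hu hpos hθ hθ₀,
    gradient_eq_smul_logGradient (hu.differentiableAt two_ne_zero) hux.ne', hθ, norm_smul,
    Real.norm_of_nonneg hux.le, Real.mul_rpow hux.le (norm_nonneg _), real_inner_smul_right]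
  linear_combination (-inner ℝ x θ * ‖θ‖ ^ (p - 2)) * hpow

theorem normalizedGaussianPLaplacian_eq_neg_of_eigen (p : ℝ) [FiniteDimensional ℝ E]
    (hu : ContDiffAt ℝ 2 u x) (hpos : ∀ᶠ y in 𝓝 x, 0 < u y) (hθ : logGradient u x = θ)
    (hθ₀ : θ ≠ 0) (heig : -gaussianPLaplacian p u x = lam * u x ^ (p - 1)) :
    normalizedGaussianPLaplacian p x θ (fderiv ℝ (logGradient u) x) = -lam := by
  have hux : 0 < u x ^ (p - 1) := Real.rpow_pos_of_pos hpos.self_of_nhds _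
  rw [gaussianPLaplacian_eq p hu hpos hθ hθ₀] at heig
  exact mul_left_cancel₀ hux.ne' (by linear_combination -heig)

theorem gaussianPLaplacian_rpow_mul_rpow (p : ℝ) [FiniteDimensional ℝ E] {f g : E → ℝ} {a b : ℝ}
    (hab : a + b = 1) (hf : ContDiffAt ℝ 2 f x) (hf₀ : ∀ᶠ y in 𝓝 x, 0 < f y)
    (hθf : logGradient f x = θ) (hg : ContDiffAt ℝ 2 g x) (hg₀ : ∀ᶠ y in 𝓝 x, 0 < g y)
    (hθg : logGradient g x = θ) (hθ₀ : θ ≠ 0) :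
    gaussianPLaplacian p (fun y => f y ^ a * g y ^ b) x = (f x ^ a * g x ^ b) ^ (p - 1) *
      normalizedGaussianPLaplacian p x θ
        (a • fderiv ℝ (logGradient f) x + b • fderiv ℝ (logGradient g) x) := by
  have hfx : f x ≠ 0 := hf₀.self_of_nhds.ne'
  have hgx : g x ≠ 0 := hg₀.self_of_nhds.ne'
  have hpos : ∀ᶠ y in 𝓝 x, 0 < f y ^ a * g y ^ b := by
    filter_upwards [hf₀, hg₀] with y hfy hgy
    positivity
  have hθ : logGradient (fun y => f y ^ a * g y ^ b) x = θ := by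
    rw [logGradient_rpow_mul_rpow a b (hf.differentiableAt two_ne_zero) hf₀.self_of_nhds
      (hg.differentiableAt two_ne_zero) hg₀.self_of_nhds, hθf, hθg, ← add_smul, hab, one_smul]
  rw [gaussianPLaplacian_eq p ((hf.rpow_const_of_ne hfx).mul (hg.rpow_const_of_ne hgx)) hpos hθ hθ₀,
    fderiv_logGradient_rpow_mul_rpow a b hf hf₀ hg hg₀]

theorem gaussianPLaplacian_translate_geometric_mean (p t : ℝ) [FiniteDimensional ℝ E]
    {u₀ u₁ : E → ℝ} {x₀ x₁ : E} (hu₀ : ContDiffAt ℝ 2 u₀ x₀) (hpos₀ : ∀ᶠ y in 𝓝 x₀, 0 < u₀ y)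
    (hθ₀ : logGradient u₀ x₀ = θ) (hu₁ : ContDiffAt ℝ 2 u₁ x₁) (hpos₁ : ∀ᶠ y in 𝓝 x₁, 0 < u₁ y)
    (hθ₁ : logGradient u₁ x₁ = θ) (hθ : θ ≠ 0) :
    gaussianPLaplacian p (fun y => u₀ (y - x + x₀) ^ (1 - t) * u₁ (y - x + x₁) ^ t) x
      = (u₀ x₀ ^ (1 - t) * u₁ x₁ ^ t) ^ (p - 1) * normalizedGaussianPLaplacian p x θ
          ((1 - t) • fderiv ℝ (logGradient u₀) x₀ + t • fderiv ℝ (logGradient u₁) x₁) := by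
  have e₀ : x + (x₀ - x) = x₀ := add_sub_cancel x x₀
  have e₁ : x + (x₁ - x) = x₁ := add_sub_cancel x x₁
  rw [← e₀] at hu₀ hpos₀ hθ₀
  rw [← e₁] at hu₁ hpos₁ hθ₁
  rw [show (fun y => u₀ (y - x + x₀) ^ (1 - t) * u₁ (y - x + x₁) ^ t)
      = fun y => u₀ (y + (x₀ - x)) ^ (1 - t) * u₁ (y + (x₁ - x)) ^ t by
    simp only [sub_add_eq_add_sub, add_sub_assoc]]
  convert gaussianPLaplacian_rpow_mul_rpow p (sub_add_cancel 1 t)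
    hu₀.comp_add_right hpos₀.comp_add_right ((logGradient_comp_add_right u₀ _ x).trans hθ₀)
    hu₁.comp_add_right hpos₁.comp_add_right ((logGradient_comp_add_right u₁ _ x).trans hθ₁)
    hθ using 4
  all_goals simp only [fderiv_logGradient_comp_add_right, e₀, e₁]

end GaussianPLaplacian

theorem EuclideanSpace.neg_gaussianPLaplacian_eq {n : ℕ} (p : ℝ)
    (u : EuclideanSpace ℝ (Fin n) → ℝ) (x : EuclideanSpace ℝ (Fin n)) :
    -gaussianPLaplacian p u x
      = -(∑ i, fderiv ℝ (fun y => (‖gradient u y‖ ^ (p-2)) • gradient u y) x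
          (EuclideanSpace.single i 1) i)
        + (inner ℝ x (gradient u x) : ℝ) * ‖gradient u x‖ ^ (p-2) := by
  rw [gaussianPLaplacian, EuclideanSpace.divergence_eq_sum, neg_sub, sub_eq_neg_add]
  rfl

theorem geometric_mean_subsolution_pointwise_general
    (n : ℕ) (p lam0 lam1 t : ℝ)
    (u₀ u₁ : EuclideanSpace ℝ (Fin n) → ℝ)
    (xb0 xb1 xb θ : EuclideanSpace ℝ (Fin n))
    (hxb : xb = (1-t) • xb0 + t • xb1)
    (hC₀ : ∀ᶠ y in nhds xb0, 0 < u₀ y) (hC₁ : ∀ᶠ y in nhds xb1, 0 < u₁ y)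
    (hu₀ : ContDiffAt ℝ 2 u₀ xb0) (hu₁ : ContDiffAt ℝ 2 u₁ xb1)
    (hθ : θ ≠ 0)
    (hθ₀ : gradient u₀ xb0 = u₀ xb0 • θ) (hθ₁ : gradient u₁ xb1 = u₁ xb1 • θ)
    (hPDE₀ :
      -(∑ i, fderiv ℝ (fun y => (‖gradient u₀ y‖ ^ (p-2)) • gradient u₀ y) xb0
          (EuclideanSpace.single i 1) i)
        + (inner ℝ xb0 (gradient u₀ xb0) : ℝ) * ‖gradient u₀ xb0‖ ^ (p-2)
      = lam0 * u₀ xb0 ^ (p-1))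
    (hPDE₁ :
      -(∑ i, fderiv ℝ (fun y => (‖gradient u₁ y‖ ^ (p-2)) • gradient u₁ y) xb1
          (EuclideanSpace.single i 1) i)
        + (inner ℝ xb1 (gradient u₁ xb1) : ℝ) * ‖gradient u₁ xb1‖ ^ (p-2)
      = lam1 * u₁ xb1 ^ (p-1))
    (ψ : EuclideanSpace ℝ (Fin n) → ℝ)
    (hψ : ∀ x, ψ x = u₀ (x - xb + xb0) ^ (1-t) * u₁ (x - xb + xb1) ^ t) :
    -(∑ i, fderiv ℝ (fun y => (‖gradient ψ y‖ ^ (p-2)) • gradient ψ y) xb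
        (EuclideanSpace.single i 1) i)
      + (inner ℝ xb (gradient ψ xb) : ℝ) * ‖gradient ψ xb‖ ^ (p-2)
      ≤ ((1-t) * lam0 + t * lam1) * ψ xb ^ (p-1) := by
  rw [← EuclideanSpace.neg_gaussianPLaplacian_eq] at hPDE₀ hPDE₁ ⊢
  have hV₀ := logGradient_eq_of_gradient_eq_smul (hu₀.differentiableAt two_ne_zero)
    hC₀.self_of_nhds.ne' hθ₀
  have hV₁ := logGradient_eq_of_gradient_eq_smul (hu₁.differentiableAt two_ne_zero)
    hC₁.self_of_nhds.ne' hθ₁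
  have hN₀ := normalizedGaussianPLaplacian_eq_neg_of_eigen p hu₀ hC₀ hV₀ hθ hPDE₀
  have hN₁ := normalizedGaussianPLaplacian_eq_neg_of_eigen p hu₁ hC₁ hV₁ hθ hPDE₁
  have hψxb : ψ xb = u₀ xb0 ^ (1 - t) * u₁ xb1 ^ t := by rw [hψ, sub_self, zero_add, zero_add]
  rw [hψxb, funext hψ, gaussianPLaplacian_translate_geometric_mean p t hu₀ hC₀ hV₀ hu₁ hC₁ hV₁ hθ,
    hxb, normalizedGaussianPLaplacian_convex_comb, hN₀, hN₁]
  linarith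

/-- Key pointwise computation for the Brunn–Minkowski inequality: the geometric
mean `ψ` of two eigenfunction-like functions is a subsolution at `x̄`. -/
theorem geometric_mean_subsolution_pointwise
    (n : ℕ) (p lam0 lam1 t : ℝ) (hp : 1 < p) (ht : t ∈ Set.Ioo (0:ℝ) 1)
    (u₀ u₁ : EuclideanSpace ℝ (Fin n) → ℝ)
    (xb0 xb1 xb θ : EuclideanSpace ℝ (Fin n))
    (hxb : xb = (1-t) • xb0 + t • xb1)
    (hC₀ : ∀ᶠ y in nhds xb0, 0 < u₀ y) (hC₁ : ∀ᶠ y in nhds xb1, 0 < u₁ y)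
    (hu₀ : ContDiffAt ℝ 2 u₀ xb0) (hu₁ : ContDiffAt ℝ 2 u₁ xb1)
    (hθ : θ ≠ 0)
    (hθ₀ : gradient u₀ xb0 = u₀ xb0 • θ) (hθ₁ : gradient u₁ xb1 = u₁ xb1 • θ)
    (hPDE₀ :
      -(∑ i, fderiv ℝ (fun y => (‖gradient u₀ y‖ ^ (p-2)) • gradient u₀ y) xb0
          (EuclideanSpace.single i 1) i)
        + (inner ℝ xb0 (gradient u₀ xb0) : ℝ) * ‖gradient u₀ xb0‖ ^ (p-2)
      = lam0 * u₀ xb0 ^ (p-1))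
    (hPDE₁ :
      -(∑ i, fderiv ℝ (fun y => (‖gradient u₁ y‖ ^ (p-2)) • gradient u₁ y) xb1
          (EuclideanSpace.single i 1) i)
        + (inner ℝ xb1 (gradient u₁ xb1) : ℝ) * ‖gradient u₁ xb1‖ ^ (p-2)
      = lam1 * u₁ xb1 ^ (p-1))
    (ψ : EuclideanSpace ℝ (Fin n) → ℝ)
    (hψ : ∀ x, ψ x = u₀ (x - xb + xb0) ^ (1-t) * u₁ (x - xb + xb1) ^ t) :
    -(∑ i, fderiv ℝ (fun y => (‖gradient ψ y‖ ^ (p-2)) • gradient ψ y) xb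
        (EuclideanSpace.single i 1) i)
      + (inner ℝ xb (gradient ψ xb) : ℝ) * ‖gradient ψ xb‖ ^ (p-2)
      ≤ ((1-t) * lam0 + t * lam1) * ψ xb ^ (p-1) :=
  geometric_mean_subsolution_pointwise_general n p lam0 lam1 t u₀ u₁ xb0 xb1 xb θ hxb hC₀ hC₁ hu₀
    hu₁ hθ hθ₀ hθ₁ hPDE₀ hPDE₁ ψ hψ
end
end
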